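/- For each u ∈ {0,1}^{ℤ_{>0}}, the projection f_u: Y_u → [0,1] onto the first coordinate, (x₁,x₂) ↦ x₁, is a bijection satisfying (1/√2)·d(x,y) ≤ |f_u(x) − f_u(y)| ≤ d(x,y) for all x, y ∈ Y_u. Consequently d_L([0,1], Y_u) ≤ (1/2) log 2. -/

import Mathlib

/-!
On each dyadic block `[2⁻ⁿ, 2¹⁻ⁿ]`, `Y_u` is the graph of a `1`-Lipschitz function (zero, or a tent
of slopes `±1`) lying in the triangle `0 ≤ y ≤ min (x - 2⁻ⁿ) (2¹⁻ⁿ - x)`. Points of different blocks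
are separated by a block endpoint, where these triangles pinch to height `0`, so in every case
`|x₂ - y₂| ≤ |x₁ - y₁|`. Thus `Y_u` is a graph over `[0, 1]` with slopes at most `1`, whence
`|x₁ - y₁| ≤ d(x, y) ≤ √2 |x₁ - y₁|`. On the flat segment `[3/4, 1] × {0}` the projection is an
isometry, so its dilation is exactly `1` while that of its inverse lies in `[1, √2]`.
-/

open ENNReal

/-- The dilation (smallest Lipschitz constant) of a map between metric spaces. -/
noncomputable def dil {X : Type*} {Y : Type*} [MetricSpace X] [MetricSpace Y]
    (f : X → Y) : ℝ :=
  sInf {K : ℝ | ∀ x y : X, dist (f x) (f y) ≤ K * dist x y}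

/-- A bijection is a bi-Lipschitz homeomorphism if it and its inverse are Lipschitz. -/
def IsBiLipschitzEquiv {X : Type*} {Y : Type*} [MetricSpace X] [MetricSpace Y]
    (f : X ≃ Y) : Prop :=
  (∃ K : NNReal, LipschitzWith K f) ∧ (∃ K : NNReal, LipschitzWith K f.symm)

/-- The quantity `|log dil f| + |log dil f⁻¹|`. -/
noncomputable def lipCost {X : Type*} {Y : Type*} [MetricSpace X] [MetricSpace Y]
    (f : X ≃ Y) : ℝ :=
  |Real.log (dil (f : X → Y))| + |Real.log (dil (f.symm : Y → X))|

/-- The Lipschitz distance: the infimum of `|log dil f| + |log dil f⁻¹|` over all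
bi-Lipschitz homeomorphisms `f : X → Y` (`∞` if none exists). -/
noncomputable def lipDist (X : Type*) (Y : Type*) [MetricSpace X] [MetricSpace Y] : ℝ≥0∞ :=
  ⨅ (f : X ≃ Y) (_ : IsBiLipschitzEquiv f), ENNReal.ofReal (lipCost f)

/-- The Euclidean plane. -/
abbrev E2 := EuclideanSpace ℝ (Fin 2)

/-- The flat part `J(n,0)` and the pulse part `J(n,1)` in `ℝ²`. -/
def Jset (n : ℕ+) : Bool → Set E2
  | false => {p | 1/2^(n:ℕ) ≤ p 0 ∧ p 0 ≤ 1/2^((n:ℕ)-1) ∧ p 1 = 0}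
  | true =>
      {p | 3/2^((n:ℕ)+1) ≤ p 0 ∧ p 0 ≤ 1/2^((n:ℕ)-1) ∧ p 1 = 0} ∪
      {p | 5/2^((n:ℕ)+2) ≤ p 0 ∧ p 0 ≤ 3/2^((n:ℕ)+1) ∧ p 1 = 3/2^((n:ℕ)+1) - p 0} ∪
      {p | 1/2^(n:ℕ) ≤ p 0 ∧ p 0 ≤ 5/2^((n:ℕ)+2) ∧ p 1 = p 0 - 1/2^(n:ℕ)}

/-- `Y_u = {(0,0)} ∪ ⋃_{n ≥ 1} J(n, u_n) ⊂ ℝ²` with the Euclidean metric. -/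
def Yset (u : ℕ+ → Bool) : Set E2 :=
  {p | p 0 = 0 ∧ p 1 = 0} ∪ ⋃ n : ℕ+, Jset n (u n)


open Set

section Dilation

variable {X Y : Type*} [MetricSpace X] [MetricSpace Y]

-- `x ≠ y` bounds the set of Lipschitz constants below by `0`; otherwise its `sInf` is junk.
lemma dil_le_of_lipschitzWith {f : X → Y} {K : NNReal} (hf : LipschitzWith K f) {x y : X}
    (hxy : x ≠ y) : dil f ≤ K :=
  csInf_le ⟨0, fun _ hK' => nonneg_of_mul_nonneg_left (dist_nonneg.trans (hK' x y))
    (dist_pos.2 hxy)⟩ hf.dist_le_mul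

lemma le_dil_of_lipschitzWith {f : X → Y} {K : NNReal} (hf : LipschitzWith K f) {x y : X}
    (hxy : x ≠ y) {r : ℝ} (h : r * dist x y ≤ dist (f x) (f y)) : r ≤ dil f :=
  le_csInf ⟨K, hf.dist_le_mul⟩ fun _ hK' =>
    le_of_mul_le_mul_right (h.trans (hK' x y)) (dist_pos.2 hxy)

lemma lipCost_le_log {f : X ≃ Y} {K : NNReal} (hf : LipschitzWith K f)
    (hf_symm : LipschitzWith 1 f.symm) {p q : Y} (hpq : p ≠ q)
    (hiso : dist (f.symm p) (f.symm q) = dist p q) : lipCost f ≤ Real.log K := by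
  have hpq' : f.symm p ≠ f.symm q := f.symm.injective.ne hpq
  have hdil_symm : dil f.symm = 1 :=
    le_antisymm (by simpa using dil_le_of_lipschitzWith hf_symm hpq)
      (le_dil_of_lipschitzWith hf_symm hpq (by rw [one_mul, hiso]))
  have hdil : 1 ≤ dil f :=
    le_dil_of_lipschitzWith hf hpq' (by rw [one_mul, hiso, f.apply_symm_apply, f.apply_symm_apply])
  rw [lipCost, hdil_symm, Real.log_one, abs_zero, add_zero, abs_of_nonneg (Real.log_nonneg hdil)]
  exact Real.log_le_log (by linarith) (dil_le_of_lipschitzWith hf hpq')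

end Dilation

section Plane

lemma E2.ext {p q : E2} (h0 : p 0 = q 0) (h1 : p 1 = q 1) : p = q :=
  PiLp.ext <| Fin.forall_fin_two.2 ⟨h0, h1⟩

lemma E2.dist_eq (p q : E2) : dist p q = √((p 0 - q 0) ^ 2 + (p 1 - q 1) ^ 2) := by
  simp [EuclideanSpace.dist_eq, Fin.sum_univ_two, Real.dist_eq, sq_abs]

lemma E2.dist_eq_abs_of_apply_one_eq {p q : E2} (h : p 1 = q 1) : dist p q = |p 0 - q 0| := by
  rw [E2.dist_eq, h, sub_self, zero_pow two_ne_zero, add_zero, Real.sqrt_sq_eq_abs]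

lemma E2.eq_of_abs_sub_le {p q : E2} (h : |p 1 - q 1| ≤ |p 0 - q 0|) (h0 : p 0 = q 0) :
    p = q :=
  E2.ext h0 <| sub_eq_zero.1 <| abs_nonpos_iff.1 <| by rwa [h0, sub_self, abs_zero] at h

lemma E2.abs_sub_apply_zero_le_dist (p q : E2) : |p 0 - q 0| ≤ dist p q := by
  simpa [Real.dist_eq] using PiLp.dist_apply_le p q 0

lemma E2.dist_le_sqrt_two_mul_of_abs_sub_le {p q : E2} (h : |p 1 - q 1| ≤ |p 0 - q 0|) :
    dist p q ≤ √2 * |p 0 - q 0| := by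
  have hsq : (p 1 - q 1) ^ 2 ≤ (p 0 - q 0) ^ 2 := sq_le_sq.2 h
  rw [E2.dist_eq, ← Real.sqrt_sq (abs_nonneg (p 0 - q 0)), ← Real.sqrt_mul zero_le_two, sq_abs]
  exact Real.sqrt_le_sqrt (by linarith)

def tentRegion (c : ℝ) : Set E2 := {p | 0 ≤ p 1 ∧ p 1 ≤ p 0 - c ∧ p 1 ≤ 2 * c - p 0}

lemma abs_sub_le_of_mem_tentRegion {c c' : ℝ} {p q : E2} (hc : 2 * c' ≤ c)
    (hp : p ∈ tentRegion c) (hq : q ∈ tentRegion c') : |p 1 - q 1| ≤ |p 0 - q 0| := by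
  obtain ⟨hp₁, hp₂, -⟩ := hp
  obtain ⟨hq₁, -, hq₃⟩ := hq
  rw [abs_of_nonneg (by linarith : 0 ≤ p 0 - q 0), abs_le]
  constructor <;> linarith

end Plane

section Profile

noncomputable def pulse (c x : ℝ) : ℝ := max 0 (min (x - c) (3 / 2 * c - x))

noncomputable def blockHeight : Bool → ℝ → ℝ → ℝ
  | false, _, _ => 0
  | true, c, x => pulse c x

lemma lipschitzWith_pulse (c : ℝ) : LipschitzWith 1 (pulse c) := by
  show LipschitzWith 1 fun x => max 0 (min (x - c) (3 / 2 * c - x))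
  simpa using (((IsometryEquiv.subRight c).isometry.lipschitz.min
    (IsometryEquiv.subLeft (3 / 2 * c)).isometry.lipschitz).const_max 0)

lemma lipschitzWith_blockHeight (b : Bool) (c : ℝ) : LipschitzWith 1 (blockHeight b c) := by
  cases b
  exacts [LipschitzWith.const' 0, lipschitzWith_pulse c]

lemma blockHeight_eq_zero_of_le {b : Bool} {c x : ℝ} (h : 3 / 2 * c ≤ x) :
    blockHeight b c x = 0 := by
  cases b
  · rfl
  · exact max_eq_left (by linarith [min_le_right (x - c) (3 / 2 * c - x)])

lemma pulse_graph_iff {c x y : ℝ} (hc : 0 < c) :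
    (c ≤ x ∧ x ≤ 2 * c ∧ y = pulse c x) ↔
      ((3 / 2 * c ≤ x ∧ x ≤ 2 * c ∧ y = 0) ∨
          (5 / 4 * c ≤ x ∧ x ≤ 3 / 2 * c ∧ y = 3 / 2 * c - x)) ∨
        (c ≤ x ∧ x ≤ 5 / 4 * c ∧ y = x - c) := by
  constructor
  · rintro ⟨hx₁, hx₂, rfl⟩
    rcases le_total x (5 / 4 * c) with h₁ | h₁
    · refine Or.inr ⟨hx₁, h₁, ?_⟩
      rw [pulse, min_eq_left (by linarith), max_eq_right (by linarith)]
    rcases le_total x (3 / 2 * c) with h₂ | h₂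
    · refine Or.inl (Or.inr ⟨h₁, h₂, ?_⟩)
      rw [pulse, min_eq_right (by linarith), max_eq_right (by linarith)]
    · refine Or.inl (Or.inl ⟨h₂, hx₂, ?_⟩)
      rw [pulse, min_eq_right (by linarith), max_eq_left (by linarith)]
  · rintro ((⟨hx₁, hx₂, rfl⟩ | ⟨hx₁, hx₂, rfl⟩) | ⟨hx₁, hx₂, rfl⟩)
    · refine ⟨by linarith, hx₂, ?_⟩
      rw [pulse, min_eq_right (by linarith), max_eq_left (by linarith)]
    · refine ⟨by linarith, by linarith, ?_⟩
      rw [pulse, min_eq_right (by linarith), max_eq_right (by linarith)]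
    · refine ⟨hx₁, by linarith, ?_⟩
      rw [pulse, min_eq_left (by linarith), max_eq_right (by linarith)]

lemma blockHeight_mem_tentRegion {b : Bool} {c x : ℝ} (hc : 0 ≤ c) (hx₁ : c ≤ x)
    (hx₂ : x ≤ 2 * c) :
    0 ≤ blockHeight b c x ∧ blockHeight b c x ≤ x - c ∧ blockHeight b c x ≤ 2 * c - x := by
  cases b
  · exact ⟨le_rfl, sub_nonneg.2 hx₁, sub_nonneg.2 hx₂⟩
  · simp only [blockHeight, pulse]
    refine ⟨le_max_left _ _, max_le (by linarith) (min_le_left _ _), max_le (by linarith) ?_⟩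
    exact (min_le_right _ _).trans (by linarith)

end Profile

section Blocks

noncomputable def blockStart (n : ℕ+) : ℝ := 1 / 2 ^ (n : ℕ)

lemma blockStart_pos (n : ℕ+) : 0 < blockStart n := by
  unfold blockStart; positivity

lemma two_mul_blockStart_le {n m : ℕ+} (h : n < m) : 2 * blockStart m ≤ blockStart n := by
  rw [blockStart, blockStart, mul_one_div, div_le_div_iff₀ (by positivity) (by positivity),
    one_mul, ← pow_succ']
  exact pow_le_pow_right₀ one_le_two h

lemma blockStart_le_half (n : ℕ+) : blockStart n ≤ 1 / 2 := by
  unfold blockStart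
  gcongr
  exact le_self_pow₀ one_le_two n.ne_zero

lemma one_div_two_pow_pred (n : ℕ+) : (1 : ℝ) / 2 ^ ((n : ℕ) - 1) = 2 * blockStart n := by
  obtain ⟨k, hk⟩ : ∃ k, (n : ℕ) = k + 1 := ⟨_, (Nat.succ_pred_eq_of_pos n.pos).symm⟩
  rw [blockStart, hk, Nat.add_sub_cancel, pow_succ]
  field_simp

lemma three_div_two_pow_succ (n : ℕ+) :
    (3 : ℝ) / 2 ^ ((n : ℕ) + 1) = 3 / 2 * blockStart n := by
  rw [blockStart, pow_succ]
  field_simp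

lemma five_div_two_pow_add_two (n : ℕ+) :
    (5 : ℝ) / 2 ^ ((n : ℕ) + 2) = 5 / 4 * blockStart n := by
  rw [blockStart, pow_add]
  field_simp
  norm_num

lemma mem_Jset_iff {n : ℕ+} {b : Bool} {p : E2} :
    p ∈ Jset n b ↔ blockStart n ≤ p 0 ∧ p 0 ≤ 2 * blockStart n ∧
      p 1 = blockHeight b (blockStart n) (p 0) := by
  cases b
  · simp only [Jset, mem_ofPred_eq, one_div_two_pow_pred]
    rfl
  · simp only [Jset, mem_union, mem_ofPred_eq, one_div_two_pow_pred, three_div_two_pow_succ,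
      five_div_two_pow_add_two, show (1 : ℝ) / 2 ^ (n : ℕ) = blockStart n from rfl]
    exact (pulse_graph_iff (blockStart_pos n)).symm

lemma Jset_subset_tentRegion (n : ℕ+) (b : Bool) : Jset n b ⊆ tentRegion (blockStart n) := by
  intro p hp
  obtain ⟨hx₁, hx₂, hy⟩ := mem_Jset_iff.1 hp
  rw [tentRegion, mem_ofPred_eq, hy]
  exact blockHeight_mem_tentRegion (blockStart_pos n).le hx₁ hx₂

lemma abs_sub_le_of_mem_Jset {n : ℕ+} {b : Bool} {p q : E2} (hp : p ∈ Jset n b)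
    (hq : q ∈ Jset n b) : |p 1 - q 1| ≤ |p 0 - q 0| := by
  rw [(mem_Jset_iff.1 hp).2.2, (mem_Jset_iff.1 hq).2.2, ← Real.dist_eq, ← Real.dist_eq]
  simpa using (lipschitzWith_blockHeight b (blockStart n)).dist_le_mul (p 0) (q 0)

lemma exists_mem_Icc_blockStart {x : ℝ} (hx₀ : 0 < x) (hx₁ : x ≤ 1) :
    ∃ n : ℕ+, blockStart n ≤ x ∧ x ≤ 2 * blockStart n := by
  obtain ⟨k, hk₁, hk₂⟩ :=
    exists_nat_pow_near (one_le_inv_iff₀.2 ⟨hx₀, hx₁⟩) one_lt_two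
  refine ⟨k.succPNat, ?_, ?_⟩ <;> simp only [blockStart, Nat.succPNat_coe, one_div]
  · exact ((inv_lt_comm₀ hx₀ (by positivity)).1 hk₂).le
  · rw [pow_succ, mul_inv_rev, mul_inv_cancel_left₀ two_ne_zero]
    exact (le_inv_comm₀ (by positivity) hx₀).1 hk₁

end Blocks

section Projection

variable {u : ℕ+ → Bool}

lemma abs_sub_le_of_mem_Yset {p q : E2} (hp : p ∈ Yset u) (hq : q ∈ Yset u) :
    |p 1 - q 1| ≤ |p 0 - q 0| := by
  have horigin : ∀ {p : E2}, p 0 = 0 → p 1 = 0 → p ∈ tentRegion 0 := fun h₀ h₁ => by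
    simp [tentRegion, h₀, h₁]
  rcases hp with ⟨hp₀, hp₁⟩ | hp <;> rcases hq with ⟨hq₀, hq₁⟩ | hq
  · simp [hp₀, hp₁, hq₀, hq₁]
  · obtain ⟨m, hm⟩ := mem_iUnion.1 hq
    rw [abs_sub_comm, abs_sub_comm (p 0)]
    exact abs_sub_le_of_mem_tentRegion (by simpa using (blockStart_pos m).le)
      (Jset_subset_tentRegion _ _ hm) (horigin hp₀ hp₁)
  · obtain ⟨n, hn⟩ := mem_iUnion.1 hp
    exact abs_sub_le_of_mem_tentRegion (by simpa using (blockStart_pos n).le)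
      (Jset_subset_tentRegion _ _ hn) (horigin hq₀ hq₁)
  · obtain ⟨n, hn⟩ := mem_iUnion.1 hp
    obtain ⟨m, hm⟩ := mem_iUnion.1 hq
    rcases lt_trichotomy n m with h | rfl | h
    · exact abs_sub_le_of_mem_tentRegion (two_mul_blockStart_le h)
        (Jset_subset_tentRegion _ _ hn) (Jset_subset_tentRegion _ _ hm)
    · exact abs_sub_le_of_mem_Jset hn hm
    · rw [abs_sub_comm, abs_sub_comm (p 0)]
      exact abs_sub_le_of_mem_tentRegion (two_mul_blockStart_le h)
        (Jset_subset_tentRegion _ _ hm) (Jset_subset_tentRegion _ _ hn)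

lemma apply_zero_mem_Icc_of_mem_Yset {p : E2} (hp : p ∈ Yset u) : p 0 ∈ Icc (0 : ℝ) 1 := by
  rcases hp with ⟨hp₀, -⟩ | hp
  · simp [hp₀]
  · obtain ⟨n, hn⟩ := mem_iUnion.1 hp
    obtain ⟨h₁, h₂, -⟩ := mem_Jset_iff.1 hn
    constructor <;> linarith [blockStart_pos n, blockStart_le_half n]

lemma exists_mem_Yset_apply_zero_eq {x : ℝ} (hx : x ∈ Icc (0 : ℝ) 1) :
    ∃ p ∈ Yset u, p 0 = x := by
  rcases hx.1.eq_or_lt with rfl | hx₀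
  · exact ⟨!₂[0, 0], Or.inl ⟨rfl, rfl⟩, rfl⟩
  · obtain ⟨n, h₁, h₂⟩ := exists_mem_Icc_blockStart hx₀ hx.2
    exact ⟨!₂[x, blockHeight (u n) (blockStart n) x],
      Or.inr (mem_iUnion.2 ⟨n, mem_Jset_iff.2 ⟨h₁, h₂, rfl⟩⟩), rfl⟩

lemma mem_Yset_of_mem_Icc {x : ℝ} (hx : x ∈ Icc (3 / 4 : ℝ) 1) : !₂[x, 0] ∈ Yset u := by
  have h₁ : blockStart 1 = 1 / 2 := by simp [blockStart]
  refine Or.inr (mem_iUnion.2 ⟨1, mem_Jset_iff.2 ⟨?_, ?_, ?_⟩⟩)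
  · show blockStart 1 ≤ x
    linarith [hx.1]
  · show x ≤ 2 * blockStart 1
    linarith [hx.2]
  · exact (blockHeight_eq_zero_of_le (by show 3 / 2 * blockStart 1 ≤ x; linarith [hx.1])).symm

variable (u) in
def projYset (p : Yset u) : Icc (0 : ℝ) 1 := ⟨(p : E2) 0, apply_zero_mem_Icc_of_mem_Yset p.2⟩

lemma dist_projYset (p q : Yset u) :
    dist (projYset u p) (projYset u q) = |(p : E2) 0 - (q : E2) 0| :=
  Real.dist_eq _ _

lemma dist_le_sqrt_two_mul_dist_projYset (p q : Yset u) :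
    dist p q ≤ √2 * dist (projYset u p) (projYset u q) := by
  rw [dist_projYset]
  exact E2.dist_le_sqrt_two_mul_of_abs_sub_le (abs_sub_le_of_mem_Yset p.2 q.2)

lemma lipschitzWith_projYset : LipschitzWith 1 (projYset u) :=
  LipschitzWith.of_dist_le_mul fun p q => by
    rw [NNReal.coe_one, one_mul, dist_projYset]
    exact E2.abs_sub_apply_zero_le_dist (p : E2) q

lemma projYset_bijective : Function.Bijective (projYset u) := by
  refine ⟨fun p q h => Subtype.ext ?_, fun x => ?_⟩
  · exact E2.eq_of_abs_sub_le (abs_sub_le_of_mem_Yset p.2 q.2) (congrArg Subtype.val h)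
  · obtain ⟨p, hp, hpx⟩ := exists_mem_Yset_apply_zero_eq (u := u) x.2
    exact ⟨⟨p, hp⟩, Subtype.ext hpx⟩

variable (u) in
noncomputable def projYsetEquiv : Yset u ≃ Icc (0 : ℝ) 1 :=
  Equiv.ofBijective _ projYset_bijective

lemma lipschitzWith_projYsetEquiv_symm : LipschitzWith (NNReal.sqrt 2) (projYsetEquiv u).symm :=
  LipschitzWith.of_dist_le_mul fun x y => by
    have h := dist_le_sqrt_two_mul_dist_projYset ((projYsetEquiv u).symm x)
      ((projYsetEquiv u).symm y)
    rwa [show projYset u = projYsetEquiv u from rfl, Equiv.apply_symm_apply,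
      Equiv.apply_symm_apply, ← NNReal.coe_ofNat, ← Real.coe_sqrt] at h

lemma exists_ne_dist_projYset_eq :
    ∃ p q : Yset u, p ≠ q ∧ dist (projYset u p) (projYset u q) = dist p q := by
  refine ⟨⟨!₂[3 / 4, 0], mem_Yset_of_mem_Icc (by norm_num)⟩,
    ⟨!₂[1, 0], mem_Yset_of_mem_Icc (by norm_num)⟩, fun h => ?_, ?_⟩
  · have h₀ := congrArg (fun p : Yset u => (p : E2) 0) h
    norm_num at h₀
  · rw [dist_projYset, Subtype.dist_eq]
    exact (E2.dist_eq_abs_of_apply_one_eq (p := !₂[3 / 4, 0]) (q := !₂[1, 0]) rfl).symm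

end Projection

/-- The first-coordinate projection `f_u : Y_u → [0,1]` is a bijection with
`(1/√2) d(x,y) ≤ |f_u x - f_u y| ≤ d(x,y)`; consequently
`d_L([0,1], Y_u) ≤ (1/2) log 2`. -/
theorem projection_biLipschitz (u : ℕ+ → Bool) :
    (∃ g : ↥(Yset u) → ↥(Set.Icc (0:ℝ) 1),
      (∀ x : ↥(Yset u), (g x : ℝ) = (x : E2) 0) ∧ Function.Bijective g ∧
      (∀ x y : ↥(Yset u),
        (1 / Real.sqrt 2) * dist x y ≤ |(x : E2) 0 - (y : E2) 0| ∧
        |(x : E2) 0 - (y : E2) 0| ≤ dist x y)) ∧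
    lipDist ↥(Set.Icc (0:ℝ) 1) ↥(Yset u) ≤ ENNReal.ofReal ((1/2) * Real.log 2) := by
  refine ⟨⟨projYset u, fun _ => rfl, projYset_bijective, fun p q => ⟨?_, ?_⟩⟩, ?_⟩
  · rw [one_div, inv_mul_le_iff₀ (by positivity), ← dist_projYset]
    exact dist_le_sqrt_two_mul_dist_projYset p q
  · simpa [dist_projYset] using lipschitzWith_projYset.dist_le_mul p q
  · obtain ⟨p, q, hpq, hiso⟩ := exists_ne_dist_projYset_eq (u := u)
    have hproj : LipschitzWith 1 (projYsetEquiv u).symm.symm := lipschitzWith_projYset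
    calc lipDist _ _ ≤ ENNReal.ofReal (lipCost (projYsetEquiv u).symm) :=
          iInf₂_le _ ⟨⟨_, lipschitzWith_projYsetEquiv_symm⟩, ⟨_, hproj⟩⟩
      _ ≤ ENNReal.ofReal ((1 / 2) * Real.log 2) :=
          ENNReal.ofReal_le_ofReal <|
            (lipCost_le_log lipschitzWith_projYsetEquiv_symm hproj hpq hiso).trans_eq <| by
              rw [Real.coe_sqrt, NNReal.coe_ofNat, Real.log_sqrt zero_le_two]; ring
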